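/- Worst-case imbalance over the linear model class with bounded coefficients and unbounded intercept: let each unit i carry a feature vector ψ_i ∈ ℝ^d, let C > 0, and let Ψ = { v ↦ α + ⟨β, v⟩ : α ∈ ℝ, ‖β‖₂ ≤ C } be the model class. If the control weights satisfy Σ_{A_ℓ=0} Σ_{i: J_i=ℓ} γ_i = n₁, then sup_{f ∈ Ψ} | (1/n₁) Σ_{A_ℓ=0} Σ_{i: J_i=ℓ} γ_i f(ψ_i) − (1/n₁) Σ_{A_ℓ=1} Σ_{i: J_i=ℓ} f(ψ_i) | = C · ‖ (1/n₁) Σ_{A_ℓ=0} Σ_{i: J_i=ℓ} γ_i ψ_i − (1/n₁) Σ_{A_ℓ=1} Σ_{i: J_i=ℓ} ψ_i ‖₂, so the balancing objective in Equation 7 implements the worst-case bias over the class Ψ. -/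

import Mathlib

/-!
The intercept contributes `(∑ γ) α - n₁ α = 0` to the imbalance, so for every model the
imbalance is the linear functional `β ↦ ⟪β, Δ⟫` evaluated at the feature imbalance `Δ`.
By Cauchy–Schwarz its absolute value is at most `C ‖Δ‖` on the ball `‖β‖ ≤ C`, with
equality at `β = (C / ‖Δ‖) • Δ`.
-/

open Finset
open scoped InnerProductSpace

section InnerProductSpace

variable {E : Type*} [NormedAddCommGroup E] [InnerProductSpace ℝ E]

theorem isGreatest_abs_inner_of_norm_le (v : E) {C : ℝ} (hC : 0 ≤ C) :
    IsGreatest {z : ℝ | ∃ β : E, ‖β‖ ≤ C ∧ z = |⟪β, v⟫_ℝ|} (C * ‖v‖) := by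
  refine ⟨?_, ?_⟩
  · rcases eq_or_ne v 0 with rfl | hv
    · exact ⟨0, by simpa using hC, by simp⟩
    have hnv : 0 < ‖v‖ := norm_pos_iff.mpr hv
    refine ⟨(C / ‖v‖) • v, ?_, ?_⟩
    · rw [norm_smul, Real.norm_of_nonneg (by positivity), div_mul_cancel₀ _ hnv.ne']
    · rw [real_inner_smul_left, real_inner_self_eq_norm_sq,
        abs_of_nonneg (by positivity)]
      field_simp
  · rintro z ⟨β, hβ, rfl⟩
    calc |⟪β, v⟫_ℝ| ≤ ‖β‖ * ‖v‖ := abs_real_inner_le_norm β v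
      _ ≤ C * ‖v‖ := mul_le_mul_of_nonneg_right hβ (norm_nonneg v)

theorem sSup_abs_inner_of_norm_le (v : E) {C : ℝ} (hC : 0 ≤ C) :
    sSup {z : ℝ | ∃ β : E, ‖β‖ ≤ C ∧ z = |⟪β, v⟫_ℝ|} = C * ‖v‖ :=
  (isGreatest_abs_inner_of_norm_le v hC).csSup_eq

variable {κ ι : Type*} (S : Finset κ) (T : κ → Finset ι) (ψ : ι → E) (α : ℝ) (β : E)

theorem sum_sum_mul_add_inner (w : ι → ℝ) :
    ∑ ℓ ∈ S, ∑ i ∈ T ℓ, w i * (α + ⟪β, ψ i⟫_ℝ)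
      = (∑ ℓ ∈ S, ∑ i ∈ T ℓ, w i) * α + ⟪β, ∑ ℓ ∈ S, ∑ i ∈ T ℓ, w i • ψ i⟫_ℝ := by
  simp only [mul_add, sum_add_distrib, sum_mul, inner_sum, real_inner_smul_right]

theorem sum_sum_add_inner :
    ∑ ℓ ∈ S, ∑ i ∈ T ℓ, (α + ⟪β, ψ i⟫_ℝ)
      = ((∑ ℓ ∈ S, #(T ℓ) : ℕ) : ℝ) * α + ⟪β, ∑ ℓ ∈ S, ∑ i ∈ T ℓ, ψ i⟫_ℝ := by
  simpa using sum_sum_mul_add_inner S T ψ α β (fun _ => 1)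

end InnerProductSpace

theorem stmt_4_general (m N d : ℕ) (A : Fin m → Bool) (J : Fin N → Fin m)
    (γ : Fin N → ℝ) (ψ : Fin N → EuclideanSpace ℝ (Fin d)) (C : ℝ) (hC : 0 < C)
    (n1 : ℕ)
    (hn1 : n1 = ∑ ℓ ∈ univ.filter (fun ℓ => A ℓ = true),
      (univ.filter (fun i => J i = ℓ)).card)
    (hsum : ∑ ℓ ∈ univ.filter (fun ℓ => A ℓ = false),
      ∑ i ∈ univ.filter (fun i => J i = ℓ), γ i = (n1 : ℝ)) :
    sSup {z : ℝ | ∃ α : ℝ, ∃ β : EuclideanSpace ℝ (Fin d), ‖β‖ ≤ C ∧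
        z = |((1 : ℝ) / n1) * (∑ ℓ ∈ univ.filter (fun ℓ => A ℓ = false),
              ∑ i ∈ univ.filter (fun i => J i = ℓ), γ i * (α + (inner ℝ β (ψ i) : ℝ)))
            - ((1 : ℝ) / n1) * (∑ ℓ ∈ univ.filter (fun ℓ => A ℓ = true),
              ∑ i ∈ univ.filter (fun i => J i = ℓ), (α + (inner ℝ β (ψ i) : ℝ)))|}
      = C * ‖((1 : ℝ) / n1) • (∑ ℓ ∈ univ.filter (fun ℓ => A ℓ = false),
              ∑ i ∈ univ.filter (fun i => J i = ℓ), γ i • ψ i)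
            - ((1 : ℝ) / n1) • (∑ ℓ ∈ univ.filter (fun ℓ => A ℓ = true),
              ∑ i ∈ univ.filter (fun i => J i = ℓ), ψ i)‖ := by
  simp_rw [sum_sum_mul_add_inner, sum_sum_add_inner, hsum, ← hn1]
  set S₀ := ∑ ℓ ∈ univ.filter (fun ℓ => A ℓ = false),
    ∑ i ∈ univ.filter (fun i => J i = ℓ), γ i • ψ i
  set S₁ := ∑ ℓ ∈ univ.filter (fun ℓ => A ℓ = true), ∑ i ∈ univ.filter (fun i => J i = ℓ), ψ i
  have intercept_cancels : ∀ (α : ℝ) (β : EuclideanSpace ℝ (Fin d)),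
      1 / (n1 : ℝ) * (n1 * α + ⟪β, S₀⟫_ℝ) - 1 / n1 * (n1 * α + ⟪β, S₁⟫_ℝ)
        = ⟪β, (1 / (n1 : ℝ)) • S₀ - (1 / (n1 : ℝ)) • S₁⟫_ℝ := fun α β => by
    rw [inner_sub_right, real_inner_smul_right, real_inner_smul_right]
    ring
  simp_rw [intercept_cancels, exists_const]
  exact sSup_abs_inner_of_norm_le _ hC.le

/-- Worst-case imbalance over the linear model class with `L²`-bounded coefficients and
unbounded intercept: if the control weights sum to `n₁`, the supremum of the absolute
imbalance over `Ψ = {v ↦ α + ⟨β, v⟩ : ‖β‖₂ ≤ C}` equals `C` times the Euclidean norm of the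
vector of imbalances in the features. -/
theorem stmt_4 (m N d : ℕ) (A : Fin m → Bool) (J : Fin N → Fin m)
    (γ : Fin N → ℝ) (ψ : Fin N → EuclideanSpace ℝ (Fin d)) (C : ℝ) (hC : 0 < C)
    (n1 : ℕ)
    (hn1 : n1 = ∑ ℓ ∈ univ.filter (fun ℓ => A ℓ = true),
      (univ.filter (fun i => J i = ℓ)).card)
    (hn1pos : 0 < n1)
    (hsize : ∀ ℓ : Fin m, 1 ≤ (univ.filter (fun i => J i = ℓ)).card)
    (hsum : ∑ ℓ ∈ univ.filter (fun ℓ => A ℓ = false),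
      ∑ i ∈ univ.filter (fun i => J i = ℓ), γ i = (n1 : ℝ)) :
    sSup {z : ℝ | ∃ α : ℝ, ∃ β : EuclideanSpace ℝ (Fin d), ‖β‖ ≤ C ∧
        z = |((1 : ℝ) / n1) * (∑ ℓ ∈ univ.filter (fun ℓ => A ℓ = false),
              ∑ i ∈ univ.filter (fun i => J i = ℓ), γ i * (α + (inner ℝ β (ψ i) : ℝ)))
            - ((1 : ℝ) / n1) * (∑ ℓ ∈ univ.filter (fun ℓ => A ℓ = true),
              ∑ i ∈ univ.filter (fun i => J i = ℓ), (α + (inner ℝ β (ψ i) : ℝ)))|}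
      = C * ‖((1 : ℝ) / n1) • (∑ ℓ ∈ univ.filter (fun ℓ => A ℓ = false),
              ∑ i ∈ univ.filter (fun i => J i = ℓ), γ i • ψ i)
            - ((1 : ℝ) / n1) • (∑ ℓ ∈ univ.filter (fun ℓ => A ℓ = true),
              ∑ i ∈ univ.filter (fun i => J i = ℓ), ψ i)‖ :=
  stmt_4_general m N d A J γ ψ C hC n1 hn1 hsum
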